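/- Let X be a complex Banach space, let P be an L-projection on X** with range i_X(X), and let Y be a closed subspace of X such that P maps Y^{⊥⊥} onto i_X(Y). Then Y is proximinal in X, i.e., for every x ∈ X there exists y₀ ∈ Y with ‖x − y₀‖ = dist(x, Y); moreover, for every x ∈ X the set {y ∈ Y : ‖x − y‖ = dist(x, Y)} of best approximations to x from Y is compact in the weak topology of X. -/

import Mathlib

/-!
Fix `x` and put `d = dist(x, Y)`. In the weak-star topology of `X**` the sets
`Y^⊥⊥ ∩ closedBall (i x) r` are compact (Banach–Alaoglu) and, for `r > d`, nonempty, since they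
contain `i y` for every `y ∈ Y` with `‖x - y‖ ≤ r`; so the set `K` obtained for `r = d` is
nonempty. For `Ψ ∈ K` we have `P Ψ = i y` with `y ∈ Y`, and `P (i x) = i x`, so the L-projection
identity gives `d ≥ ‖i x - Ψ‖ = ‖x - y‖ + ‖i y - Ψ‖ ≥ d + ‖i y - Ψ‖`. Hence `Ψ = i y` with `y` a
best approximation: `i` maps the best approximations onto the weak-star compact set `K`, and `i`
is an embedding of `X` with its weak topology into `X**` with its weak-star topology.
-/

open NormedSpace

noncomputable section

set_option maxHeartbeats 1000000

/-- The transpose (dual map) of a continuous linear map between (semi)normed spaces: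
`ctranspose f` sends a functional `g` to `g ∘ f`. -/
def ctranspose {E F : Type*} [SeminormedAddCommGroup E] [NormedSpace ℂ E]
    [SeminormedAddCommGroup F] [NormedSpace ℂ F] (f : E →L[ℂ] F) :
    StrongDual ℂ F →L[ℂ] StrongDual ℂ E :=
  (ContinuousLinearMap.compL ℂ E F ℂ).flip f

/-- A bounded linear projection `P` is an L-projection if `‖z‖ = ‖P z‖ + ‖z - P z‖`
for all `z`. -/
def IsLProjection {Z : Type*} [SeminormedAddCommGroup Z] [NormedSpace ℂ Z]
    (P : Z →L[ℂ] Z) : Prop :=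
  (∀ z, P (P z) = P z) ∧ ∀ z, ‖z‖ = ‖P z‖ + ‖z - P z‖

open Metric WeakDual

theorem WeakDual.nonempty_inter_closedBall_of_forall_gt {𝕜 E : Type*} [NontriviallyNormedField 𝕜]
    [ProperSpace 𝕜] [SeminormedAddCommGroup E] [NormedSpace 𝕜 E] {C : Set (WeakDual 𝕜 E)}
    (hC : IsClosed C) (x' : StrongDual 𝕜 E) {r : ℝ}
    (h : ∀ r' > r, (C ∩ toStrongDual ⁻¹' closedBall x' r').Nonempty) :
    (C ∩ toStrongDual ⁻¹' closedBall x' r).Nonempty := by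
  have hdir : Directed (· ⊇ ·) fun r' : Set.Ioi r => C ∩ toStrongDual ⁻¹' closedBall x' r' :=
    Monotone.directed_ge fun _ _ hle => by gcongr
  have hinter := IsCompact.nonempty_iInter_of_directed_nonempty_isCompact_isClosed _ hdir
    (fun r' => h r' r'.2) (fun r' => (isCompact_closedBall x' r').inter_left hC)
    (fun r' => hC.inter (isClosed_closedBall x' r'))
  rw [← Set.inter_iInter, ← Set.preimage_iInter, Set.iInter_subtype] at hinter
  convert hinter using 3
  exact (biInter_gt_closedBall x' r).symm

theorem IsLProjection.norm_sub_eq_add {Z : Type*} [SeminormedAddCommGroup Z] [NormedSpace ℂ Z]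
    {P : Z →L[ℂ] Z} (hP : IsLProjection P) {z : Z} (hz : P z = z) (w : Z) :
    ‖z - w‖ = ‖z - P w‖ + ‖P w - w‖ := by
  simpa [hz] using hP.2 (z - w)

section BidualAnnihilator

variable {𝕜 E : Type*} [NontriviallyNormedField 𝕜] [SeminormedAddCommGroup E] [NormedSpace 𝕜 E]

def bidualAnnihilator (Y : Submodule 𝕜 E) : Set (StrongDual 𝕜 (StrongDual 𝕜 E)) :=
  {Ψ | ∀ f : StrongDual 𝕜 E, (∀ y ∈ Y, f y = 0) → Ψ f = 0}

theorem inclusionInDoubleDual_mem_bidualAnnihilator {Y : Submodule 𝕜 E} {y : E} (hy : y ∈ Y) :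
    inclusionInDoubleDual 𝕜 E y ∈ bidualAnnihilator Y :=
  fun _ hf => hf y hy

theorem isClosed_toStrongDual_preimage_bidualAnnihilator (Y : Submodule 𝕜 E) :
    IsClosed (toStrongDual ⁻¹' bidualAnnihilator Y : Set (WeakDual 𝕜 (StrongDual 𝕜 E))) := by
  simp only [bidualAnnihilator, Set.ofPred_forall]
  exact isClosed_iInter fun f => isClosed_iInter fun _ =>
    isClosed_eq (WeakDual.eval_continuous f) continuous_const

end BidualAnnihilator

section

variable {𝕜 E : Type*} [RCLike 𝕜] [SeminormedAddCommGroup E] [NormedSpace 𝕜 E]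

theorem NormedSpace.norm_inclusionInDoubleDual (x : E) : ‖inclusionInDoubleDual 𝕜 E x‖ = ‖x‖ :=
  (inclusionInDoubleDualLi 𝕜).norm_map x

theorem NormedSpace.dist_inclusionInDoubleDual (x y : E) :
    dist (inclusionInDoubleDual 𝕜 E x) (inclusionInDoubleDual 𝕜 E y) = dist x y :=
  (inclusionInDoubleDualLi 𝕜).isometry.dist_eq x y

theorem nonempty_bidualAnnihilator_inter_closedBall_infDist (Y : Submodule 𝕜 E) (x : E) :
    (toStrongDual ⁻¹' bidualAnnihilator Y ∩
      toStrongDual ⁻¹' closedBall (inclusionInDoubleDual 𝕜 E x) (infDist x Y)).Nonempty := by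
  refine WeakDual.nonempty_inter_closedBall_of_forall_gt
    (isClosed_toStrongDual_preimage_bidualAnnihilator Y) _ fun r hr => ?_
  obtain ⟨y, hy, hxy⟩ := (infDist_lt_iff ⟨0, Y.zero_mem⟩).mp hr
  refine ⟨StrongDual.toWeakDual (inclusionInDoubleDual 𝕜 E y),
    inclusionInDoubleDual_mem_bidualAnnihilator hy, ?_⟩
  change inclusionInDoubleDual 𝕜 E y ∈ closedBall (inclusionInDoubleDual 𝕜 E x) r
  rw [mem_closedBall', dist_inclusionInDoubleDual]
  exact hxy.le

end

section LProjection

variable {X : Type*} [NormedAddCommGroup X] [NormedSpace ℂ X]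
  {P : StrongDual ℂ (StrongDual ℂ X) →L[ℂ] StrongDual ℂ (StrongDual ℂ X)} {Y : Subspace ℂ X}

local notation "ι" => inclusionInDoubleDual ℂ X

theorem exists_eq_inclusionInDoubleDual_of_norm_le_infDist
    (hP : IsLProjection (Z := StrongDual ℂ (StrongDual ℂ X)) P)
    (hrange : Set.range P = Set.range ι) (hPY : P '' bidualAnnihilator Y = ι '' Y) {x : X}
    {Ψ : StrongDual ℂ (StrongDual ℂ X)} (hΨ : Ψ ∈ bidualAnnihilator Y)
    (hd : ‖ι x - Ψ‖ ≤ infDist x Y) :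
    ∃ y ∈ Y, ‖x - y‖ = infDist x Y ∧ ι y = Ψ := by
  obtain ⟨y, hy, hPΨ⟩ : P Ψ ∈ ι '' Y := hPY ▸ Set.mem_image_of_mem P hΨ
  obtain ⟨z, hz⟩ : ι x ∈ Set.range P := hrange ▸ Set.mem_range_self x
  have hPx : P (ι x) = ι x := by rw [← hz, hP.1]
  have hsplit : ‖ι x - Ψ‖ = ‖x - y‖ + ‖ι y - Ψ‖ := by
    rw [hP.norm_sub_eq_add hPx, ← hPΨ, ← map_sub ι x y, norm_inclusionInDoubleDual]
  have hdy : infDist x Y ≤ ‖x - y‖ := dist_eq_norm x y ▸ infDist_le_dist_of_mem hy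
  have hzero : ‖ι y - Ψ‖ = 0 := le_antisymm (by linarith) (norm_nonneg (ι y - Ψ))
  exact ⟨y, hy, by linarith, sub_eq_zero.mp (norm_eq_zero.mp hzero)⟩

theorem inclusionInDoubleDualWeak_image_bestApprox_eq
    (hP : IsLProjection (Z := StrongDual ℂ (StrongDual ℂ X)) P)
    (hrange : Set.range P = Set.range ι) (hPY : P '' bidualAnnihilator Y = ι '' Y) (x : X) :
    inclusionInDoubleDualWeak ℂ X '' (toWeakSpace ℂ X '' {y | y ∈ Y ∧ ‖x - y‖ = infDist x Y}) =
      toStrongDual ⁻¹' bidualAnnihilator Y ∩ toStrongDual ⁻¹' closedBall (ι x) (infDist x Y) := by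
  ext Φ
  constructor
  · rintro ⟨_, ⟨y, ⟨hy, hxy⟩, rfl⟩, rfl⟩
    refine ⟨inclusionInDoubleDual_mem_bidualAnnihilator hy, ?_⟩
    change ι y ∈ closedBall (ι x) _
    rw [mem_closedBall', dist_inclusionInDoubleDual, dist_eq_norm, hxy]
  · rintro ⟨hΦ, hdist⟩
    rw [Set.mem_preimage, mem_closedBall', dist_eq_norm (ι x)] at hdist
    obtain ⟨y, hy, hxy, hyΦ⟩ :=
      exists_eq_inclusionInDoubleDual_of_norm_le_infDist hP hrange hPY hΦ hdist
    exact ⟨toWeakSpace ℂ X y, ⟨y, ⟨hy, hxy⟩, rfl⟩, hyΦ⟩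

end LProjection

theorem proximinal_and_weakly_compact_best_approximations_general
    (X : Type*) [NormedAddCommGroup X] [NormedSpace ℂ X]
    (P : StrongDual ℂ (StrongDual ℂ X) →L[ℂ] StrongDual ℂ (StrongDual ℂ X))
    (hP : IsLProjection (Z := StrongDual ℂ (StrongDual ℂ X)) P)
    (hrange : Set.range P = Set.range (inclusionInDoubleDual ℂ X))
    (Y : Subspace ℂ X)
    (hPY : P '' {Ψ : StrongDual ℂ (StrongDual ℂ X) | ∀ f : StrongDual ℂ X, (∀ y ∈ Y, f y = 0) → Ψ f = 0}
        = inclusionInDoubleDual ℂ X '' (Y : Set X)) :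
    (∀ x : X, ∃ y₀ ∈ Y, ‖x - y₀‖ = Metric.infDist x (Y : Set X)) ∧
    (∀ x : X, IsCompact (toWeakSpace ℂ X ''
        {y : X | y ∈ Y ∧ ‖x - y‖ = Metric.infDist x (Y : Set X)})) := by
  have himage := inclusionInDoubleDualWeak_image_bestApprox_eq hP hrange hPY
  refine ⟨fun x => ?_, fun x => ?_⟩
  · obtain ⟨_, _, ⟨y, ⟨hy, hxy⟩, rfl⟩, -⟩ :=
      (himage x).symm ▸ nonempty_bidualAnnihilator_inter_closedBall_infDist Y x
    exact ⟨y, hy, hxy⟩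
  · rw [(isEmbedding_inclusionInDoubleDualWeak ℂ X).isCompact_iff, himage x]
    exact (WeakDual.isCompact_closedBall _ _).inter_left
      (isClosed_toStrongDual_preimage_bidualAnnihilator Y)

/-- If `P` is an L-projection on `X**` with range `i_X(X)`, and `Y` is a closed
subspace of `X` such that `P` maps `Y^{⊥⊥}` onto `i_X(Y)`, then `Y` is proximinal in `X` and
the set of best approximations to any `x ∈ X` from `Y` is weakly compact. -/
theorem proximinal_and_weakly_compact_best_approximations
    (X : Type*) [NormedAddCommGroup X] [NormedSpace ℂ X] [CompleteSpace X]
    (P : StrongDual ℂ (StrongDual ℂ X) →L[ℂ] StrongDual ℂ (StrongDual ℂ X))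
    (hP : IsLProjection (Z := StrongDual ℂ (StrongDual ℂ X)) P)
    (hrange : Set.range P = Set.range (inclusionInDoubleDual ℂ X))
    (Y : Subspace ℂ X) (hY : IsClosed (Y : Set X))
    (hPY : P '' {Ψ : StrongDual ℂ (StrongDual ℂ X) | ∀ f : StrongDual ℂ X, (∀ y ∈ Y, f y = 0) → Ψ f = 0}
        = inclusionInDoubleDual ℂ X '' (Y : Set X)) :
    (∀ x : X, ∃ y₀ ∈ Y, ‖x - y₀‖ = Metric.infDist x (Y : Set X)) ∧
    (∀ x : X, IsCompact (toWeakSpace ℂ X ''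
        {y : X | y ∈ Y ∧ ‖x - y‖ = Metric.infDist x (Y : Set X)})) :=
  proximinal_and_weakly_compact_best_approximations_general X P hP hrange Y hPY
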